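/- arXiv:2103.04074 — 3 statements merged into one kernel-verified Lean document; each statement's English description precedes it below -/
import Mathlib

section
/- Let S_1, ..., S_q (q ≥ 2) be finite subsets of a set X forming an antichain under inclusion. Then for every i ∈ {1,...,q} there exists j ∈ {1,...,q} with j ≠ i such that for all u, v ∈ {1,...,q} \ {i, j}, it is NOT the case that for every x ∈ X, (indicator S_u x) + (indicator S_v x) ≤ (indicator S_i x) + (indicator S_j x). -/
/-- If `S 1, ..., S q` (`q ≥ 2`) form an antichain of finite sets under inclusion, then
for every `i` there is `j ≠ i` such that for all `u, v ∉ {i, j}` the pointwise inequality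
`1_{S u} + 1_{S v} ≤ 1_{S i} + 1_{S j}` (encoding `m_u m_v ∣ m_i m_j`) fails. -/
theorem exists_irredundant_generator {X : Type*} [DecidableEq X] {q : ℕ} (hq : 2 ≤ q)
    (S : Fin q → Finset X) (anti : ∀ a b : Fin q, a ≠ b → ¬ S a ⊆ S b) :
    ∀ i : Fin q, ∃ j : Fin q, j ≠ i ∧
      ∀ u v : Fin q, u ≠ i → u ≠ j → v ≠ i → v ≠ j →
        ¬ (∀ x : X, (if x ∈ S u then 1 else 0) + (if x ∈ S v then 1 else 0)
            ≤ (if x ∈ S i then 1 else 0) + (if x ∈ S j then (1:ℕ) else 0)) := by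
  intro i
  have hne : (Finset.univ.erase i).Nonempty := by
    rw [← Finset.card_pos, Finset.card_erase_of_mem (Finset.mem_univ i), Finset.card_univ,
      Fintype.card_fin]
    omega
  obtain ⟨j, hj, hmin⟩ := Finset.exists_min_image (Finset.univ.erase i)
    (fun k => (S k \ S i).card) hne
  refine ⟨j, Finset.ne_of_mem_erase hj, ?_⟩
  intro u v hui huj hvi hvj hle
  -- S u \ S i ⊆ S j \ S i
  have hu_sub : S u \ S i ⊆ S j \ S i := by
    intro x hx
    rw [Finset.mem_sdiff] at hx ⊢
    refine ⟨?_, hx.2⟩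
    by_contra hxj
    have h := hle x
    rw [if_pos hx.1, if_neg hx.2, if_neg hxj] at h
    split_ifs at h <;> omega
  have hv_sub : S v \ S i ⊆ S j \ S i := by
    intro x hx
    rw [Finset.mem_sdiff] at hx ⊢
    refine ⟨?_, hx.2⟩
    by_contra hxj
    have h := hle x
    rw [if_pos hx.1, if_neg hx.2, if_neg hxj] at h
    split_ifs at h <;> omega
  -- disjointness
  have hdisj : Disjoint (S u \ S i) (S v \ S i) := by
    rw [Finset.disjoint_left]
    intro x hxu hxv
    rw [Finset.mem_sdiff] at hxu hxv
    have h := hle x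
    rw [if_pos hxu.1, if_pos hxv.1, if_neg hxu.2] at h
    split_ifs at h <;> omega
  have hu_ne : (S u \ S i).Nonempty := Finset.sdiff_nonempty.mpr (anti u i hui)
  have hv_ne : (S v \ S i).Nonempty := Finset.sdiff_nonempty.mpr (anti v i hvi)
  have hcard : (S u \ S i).card + (S v \ S i).card ≤ (S j \ S i).card := by
    rw [← Finset.card_union_of_disjoint hdisj]
    exact Finset.card_le_card (Finset.union_subset hu_sub hv_sub)
  have hmin' := hmin u (Finset.mem_erase.mpr ⟨hui, Finset.mem_univ u⟩)
  have h1 := Finset.card_pos.mpr hu_ne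
  have h2 := Finset.card_pos.mpr hv_ne
  omega
end

section
/- For q ≥ 3, the simplicial complex 𝕃²_q is a quasi-tree: its facets can be ordered F_0, F_1, ..., F_q so that each F_k (k ≥ 1) is a leaf of the complex generated by F_0, ..., F_k, with joint F_0. -/
/-- The big facet `F₀` of `𝕃²_q`: all non-diagonal unordered pairs `{i,j}`, `i < j`. -/
def L2F0 (q : ℕ) : Finset (Sym2 (Fin q)) :=
  Finset.univ.filter (fun e => ¬ e.IsDiag)

/-- The facet `F_k` of `𝕃²_q`: all pairs `{k, j}` with `j ∈ {1,...,q}`. -/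
def L2F (q : ℕ) (k : Fin q) : Finset (Sym2 (Fin q)) :=
  Finset.univ.image (fun j : Fin q => s(k, j))

/-- Faces of `𝕃²_q`: subsets of `F₀` or of some `F_k`. -/
def L2IsFace (q : ℕ) (σ : Finset (Sym2 (Fin q))) : Prop :=
  σ ⊆ L2F0 q ∨ ∃ k : Fin q, σ ⊆ L2F q k

/-- Facets of `𝕃²_q`: maximal faces. -/
def L2IsFacet (q : ℕ) (σ : Finset (Sym2 (Fin q))) : Prop :=
  L2IsFace q σ ∧ ∀ τ : Finset (Sym2 (Fin q)), L2IsFace q τ → σ ⊆ τ → σ = τ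

/-! Two distinct facets `F_k`, `F_m` meet only in the pair `{k, m}`, which is off the diagonal and
hence lies in `F₀`; so `F₀` is a joint for every `F_k`. The generators `F₀, F₁, …, F_q` are exactly
the facets because they form an antichain: `F_k` contains the diagonal pair `{k, k}`, which lies in
no other generator, and for `q ≥ 3` there is a pair `{a, b}` with `a ≠ b` avoiding `k`, which lies in
`F₀` but not in `F_k`. -/

theorem maximal_exists_le_iff {P : Type*} [PartialOrder P] {S : Set P}
    (hS : IsAntichain (· ≤ ·) S) {x : P} : Maximal (fun y => ∃ g ∈ S, y ≤ g) x ↔ x ∈ S := by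
  constructor
  · rintro ⟨⟨g, hg, hxg⟩, hmax⟩
    exact (hxg.antisymm (hmax ⟨g, hg, le_rfl⟩ hxg)).symm ▸ hg
  · intro hx
    refine ⟨⟨x, hx, le_rfl⟩, fun y ⟨g, hg, hyg⟩ hxy => ?_⟩
    exact (hS.eq hx hg (hxy.trans hyg)).symm ▸ hyg

section L2

variable {q : ℕ}

@[simp]
theorem mem_L2F0 {e : Sym2 (Fin q)} : e ∈ L2F0 q ↔ ¬ e.IsDiag := by simp [L2F0]

@[simp]
theorem mem_L2F {k : Fin q} {e : Sym2 (Fin q)} : e ∈ L2F q k ↔ k ∈ e := by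
  simp [L2F, Sym2.mem_iff_exists, eq_comm]

theorem L2F_inter_L2F_of_ne {k m : Fin q} (hkm : k ≠ m) : L2F q k ∩ L2F q m = {s(k, m)} := by
  ext e
  induction e using Sym2.ind with
  | h a b =>
    simp only [Finset.mem_inter, mem_L2F, Sym2.mem_iff, Finset.mem_singleton, Sym2.eq_iff]
    grind

theorem L2F_inter_L2F_subset_L2F0 {k m : Fin q} (hkm : k ≠ m) : L2F q k ∩ L2F q m ⊆ L2F0 q := by
  simp [L2F_inter_L2F_of_ne hkm, hkm]

theorem not_L2F_subset_L2F0 (k : Fin q) : ¬ L2F q k ⊆ L2F0 q :=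
  fun h => mem_L2F0.mp (h (mem_L2F.mpr (Sym2.mem_mk_left k k))) (Sym2.mk_isDiag_iff.mpr rfl)

theorem eq_of_L2F_subset_L2F {k m : Fin q} (h : L2F q k ⊆ L2F q m) : k = m := by
  simpa [eq_comm] using h (mem_L2F.mpr (Sym2.mem_mk_left k k))

theorem not_L2F0_subset_L2F (hq : 3 ≤ q) (k : Fin q) : ¬ L2F0 q ⊆ L2F q k := by
  have hcard : 1 < (Finset.univ.erase k).card := by
    rw [Finset.card_erase_of_mem (Finset.mem_univ k), Finset.card_univ, Fintype.card_fin]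
    omega
  obtain ⟨a, ha, b, hb, hab⟩ := Finset.one_lt_card.mp hcard
  intro h
  have := h (mem_L2F0.mpr (Sym2.mk_isDiag_iff.not.mpr hab))
  simp only [mem_L2F, Sym2.mem_iff] at this
  rcases this with rfl | rfl <;> simp at ha hb

def L2Facets (q : ℕ) : Set (Finset (Sym2 (Fin q))) :=
  insert (L2F0 q) (Set.range (L2F q))

theorem isAntichain_L2Facets (hq : 3 ≤ q) :
    IsAntichain (· ≤ ·) (L2Facets q) := by
  refine IsAntichain.insert ?_ ?_ ?_
  · rintro _ ⟨k, rfl⟩ _ ⟨m, rfl⟩ hne h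
    exact hne (congrArg _ (eq_of_L2F_subset_L2F h))
  · rintro _ ⟨k, rfl⟩ -
    exact not_L2F_subset_L2F0 k
  · rintro _ ⟨k, rfl⟩ -
    exact not_L2F0_subset_L2F hq k

theorem L2IsFace_eq : L2IsFace q = fun σ => ∃ G ∈ L2Facets q, σ ≤ G := by
  ext σ
  simp [L2IsFace, L2Facets]

theorem L2IsFacet_iff_maximal {σ : Finset (Sym2 (Fin q))} :
    L2IsFacet q σ ↔ Maximal (L2IsFace q) σ :=
  maximal_iff.symm

end L2

/-- For `q ≥ 3`, `𝕃²_q` is a quasi-tree: with the facet order `F₀, F₁, ..., F_q`, each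
`F_k` (`k ≥ 1`) is a leaf of the complex generated by `F₀, ..., F_k` with joint `F₀`,
i.e. `F_k ∩ H ⊆ F₀` for every earlier facet `H ≠ F_k`; moreover these are all the facets. -/
theorem L2_quasiTree (q : ℕ) (hq : 3 ≤ q) :
    (∀ σ : Finset (Sym2 (Fin q)), L2IsFacet q σ ↔ (σ = L2F0 q ∨ ∃ k : Fin q, σ = L2F q k)) ∧
    (∀ k : Fin q, L2F q k ∩ L2F0 q ⊆ L2F0 q) ∧
    (∀ k m : Fin q, (m : ℕ) < (k : ℕ) → L2F q k ∩ L2F q m ⊆ L2F0 q) := by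
  refine ⟨fun σ => ?_, fun k => Finset.inter_subset_right,
    fun k m hmk => L2F_inter_L2F_subset_L2F0 (Fin.ne_of_gt hmk)⟩
  rw [L2IsFacet_iff_maximal, L2IsFace_eq,
    maximal_exists_le_iff (isAntichain_L2Facets hq)]
  simp [L2Facets, eq_comm]
end

section
/- Let S_1, ..., S_q be finite subsets of a set X forming an antichain under inclusion, with q ≥ 2, and fix i. There is no pair of functions φ, ψ : {1,...,q}\{i} → {1,...,q}\{i} such that for all j ≠ i and all x ∈ X, (indicator S_{φ(j)} x) + (indicator S_{ψ(j)} x) ≤ (indicator S_i x) + (indicator S_j x) with φ(j), ψ(j) ∉ {i, j}. -/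
/-!
Measure each `j ≠ i` by `#(S j \ S i)`. Outside `S i` the inequality says that `S (φ j)` and
`S (ψ j)` are disjoint and both contained in `S j`; since `S (ψ j) ⊄ S i`, this makes
`S (φ j) \ S i` a proper subset of `S j \ S i`. So `φ` strictly lowers the measure, which is
impossible at an index where the measure is minimal.
-/

namespace Finset

variable {X : Type*} [DecidableEq X] {A B C I : Finset X}

theorem mem_and_notMem_of_indicator_add_le {x : X}
    (h : (if x ∈ A then 1 else 0) + (if x ∈ C then 1 else 0)
      ≤ (if x ∈ I then 1 else 0) + (if x ∈ B then (1:ℕ) else 0))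
    (hA : x ∈ A) (hI : x ∉ I) : x ∈ B ∧ x ∉ C := by
  split_ifs at h <;> simp_all

theorem sdiff_ssubset_sdiff_of_indicator_add_le (hC : ¬ C ⊆ I)
    (h : ∀ x, (if x ∈ A then 1 else 0) + (if x ∈ C then 1 else 0)
      ≤ (if x ∈ I then 1 else 0) + (if x ∈ B then (1:ℕ) else 0)) :
    A \ I ⊂ B \ I := by
  have hAB : A \ I ⊆ B \ I := fun x hx => by
    rw [mem_sdiff] at hx ⊢
    exact ⟨(mem_and_notMem_of_indicator_add_le (h x) hx.1 hx.2).1, hx.2⟩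
  obtain ⟨x, hxC, hxI⟩ := not_subset.mp hC
  obtain ⟨hxB, hxA⟩ :=
    mem_and_notMem_of_indicator_add_le ((add_comm _ _).trans_le (h x)) hxC hxI
  exact (ssubset_iff_of_subset hAB).mpr
    ⟨x, mem_sdiff.mpr ⟨hxB, hxI⟩, fun hx => hxA (mem_sdiff.mp hx).1⟩

end Finset

/-- Key step of Proposition 3.5: if the finite sets `S 1, ..., S q` (`q ≥ 2`) form an
antichain under inclusion, then for a fixed `i` there are no functions `φ, ψ` on
`{1,...,q} \ {i}` such that `φ(j), ψ(j) ∉ {i, j}` and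
`1_{S (φ j)} + 1_{S (ψ j)} ≤ 1_{S i} + 1_{S j}` pointwise (encoding
`m_{φ(j)} m_{ψ(j)} ∣ m_i m_j`) for all `j ≠ i`. -/
theorem no_phi_psi {X : Type*} [DecidableEq X] {q : ℕ} (hq : 2 ≤ q)
    (S : Fin q → Finset X) (anti : ∀ a b : Fin q, a ≠ b → ¬ S a ⊆ S b) (i : Fin q) :
    ¬ ∃ φ ψ : {j : Fin q // j ≠ i} → {j : Fin q // j ≠ i},
        ∀ j : {j : Fin q // j ≠ i},
          (φ j : Fin q) ≠ (j : Fin q) ∧ (ψ j : Fin q) ≠ (j : Fin q) ∧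
          ∀ x : X,
            (if x ∈ S (φ j : Fin q) then 1 else 0) + (if x ∈ S (ψ j : Fin q) then 1 else 0)
              ≤ (if x ∈ S i then 1 else 0) + (if x ∈ S (j : Fin q) then (1:ℕ) else 0) := by
  rintro ⟨φ, ψ, h⟩
  obtain ⟨b, hb⟩ := Fintype.exists_ne_of_one_lt_card (by rw [Fintype.card_fin]; omega) i
  have : Nonempty {j : Fin q // j ≠ i} := ⟨⟨b, hb⟩⟩
  let excess : {j : Fin q // j ≠ i} → ℕ := fun j => (S j \ S i).card
  have descent (j : {j : Fin q // j ≠ i}) : excess (φ j) < excess j :=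
    Finset.card_lt_card <|
      Finset.sdiff_ssubset_sdiff_of_indicator_add_le (anti _ _ (ψ j).2) (h j).2.2
  exact Function.not_lt_argmin excess _ (descent (Function.argmin excess))
end
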